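/- For every n ≥ 1, the vertical-projection map sending (i,j) ↦ (0,j), which sends each vertical edge (i,j)–(i,j+1) of X_n to the edge (0,j)–(0,j+1) of Y_n and collapses each horizontal edge (i,j)–(i+1,j) of X_n to the single vertex (0,j), is a coarse f(n)-wiring of X_n into Y_n with volume exactly 2^{2^{2n}}·f(n) + 1. -/

import Mathlib

open SimpleGraph

/-- A wiring of `G` into `H`: a map on vertices together with, for each edge
(given by an ordered adjacent pair, compatibly with reversal), a walk in `H`
joining the images of the endpoints. -/
structure Wiring {V : Type*} {W : Type*} (G : SimpleGraph V) (H : SimpleGraph W) where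
  toFun : V → W
  walk : ∀ u v : V, G.Adj u v → H.Walk (toFun u) (toFun v)
  walk_symm : ∀ (u v : V) (h : G.Adj u v), walk v u (G.adj_symm h) = (walk u v h).reverse

namespace Wiring

variable {V : Type*} {W : Type*} {G : SimpleGraph V} {H : SimpleGraph W}

/-- A wiring is a coarse `k`-wiring if the vertex map is at most `k`-to-one and
every edge of `H` lies on at most `k` of the chosen walks.  (Since walks are
indexed by *ordered* adjacent pairs, with the walk of `(v,u)` the reverse of the
walk of `(u,v)`, each edge of `G` is counted twice; hence the bound `2 * k`.) -/
def IsCoarse (Wr : Wiring G H) (k : ℕ) : Prop :=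
  (∀ w : W, {v : V | Wr.toFun v = w}.ncard ≤ k) ∧
  (∀ e : Sym2 W, e ∈ H.edgeSet →
    {p : V × V | ∃ h : G.Adj p.1 p.2, e ∈ (Wr.walk p.1 p.2 h).edges}.ncard ≤ 2 * k)

/-- The vertices of the image of a wiring. -/
def imageVerts (Wr : Wiring G H) : Set W :=
  Set.range Wr.toFun ∪ {w : W | ∃ (u v : V) (h : G.Adj u v), w ∈ (Wr.walk u v h).support}

/-- The volume of a wiring: the number of vertices of its image. -/
noncomputable def volume (Wr : Wiring G H) : ℕ := Wr.imageVerts.ncard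

/-- The image of a wiring, as a subgraph of the target. -/
def imageSubgraph (Wr : Wiring G H) : H.Subgraph where
  verts := Wr.imageVerts
  Adj w w' := ∃ (u v : V) (h : G.Adj u v), (Wr.walk u v h).toSubgraph.Adj w w'
  adj_sub := by
    rintro a b ⟨u, v, h, ha⟩
    exact (Wr.walk u v h).toSubgraph.adj_sub ha
  edge_vert := by
    rintro a b ⟨u, v, h, ha⟩
    refine Or.inr ⟨u, v, h, ?_⟩
    have := (Wr.walk u v h).toSubgraph.edge_vert ha
    rwa [SimpleGraph.Walk.verts_toSubgraph] at this
  symm := ⟨by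
    rintro a b ⟨u, v, h, ha⟩
    exact ⟨u, v, h, ha.symm⟩⟩

end Wiring

/-- `wir k G H` : the minimal volume of a coarse `k`-wiring of `G` into `H`
(`⊤` if there is none). -/
noncomputable def wir {V : Type*} {W : Type*} (k : ℕ)
    (G : SimpleGraph V) (H : SimpleGraph W) : ℕ∞ :=
  sInf {N : ℕ∞ | ∃ Wr : Wiring G H, Wr.IsCoarse k ∧ N = (Wr.volume : ℕ∞)}

/-- The `k`-wiring profile of `X` into `H`. -/
noncomputable def wirProfile {V : Type*} {W : Type*}
    (X : SimpleGraph V) (H : SimpleGraph W) (k n : ℕ) : ℕ∞ :=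
  sSup {N : ℕ∞ | ∃ Γ : X.Subgraph, Γ.verts.Finite ∧ Γ.verts.ncard ≤ n ∧ N = wir k Γ.coe H}

/-- One-directional adjacency generating the 2-dimensional integer grid. -/
def gridStep (p q : ℤ × ℤ) : Prop :=
  (p.1 = q.1 ∧ q.2 = p.2 + 1) ∨ (p.2 = q.2 ∧ q.1 = p.1 + 1)

/-- The 2-dimensional integer grid: vertices `ℤ²`, edges between points at distance 1. -/
def grid : SimpleGraph (ℤ × ℤ) where
  Adj p q := p ≠ q ∧ (gridStep p q ∨ gridStep q p)
  symm := ⟨fun p q h => ⟨h.1.symm, h.2.symm⟩⟩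
  loopless := ⟨fun p h => h.1 rfl⟩

/-- One-directional adjacency for the column graphs: vertical steps everywhere,
horizontal steps at heights divisible by `t`. -/
def colStep (t : ℕ) (p q : ℕ × ℕ) : Prop :=
  (p.1 = q.1 ∧ q.2 = p.2 + 1) ∨ (p.2 = q.2 ∧ t ∣ p.2 ∧ q.1 = p.1 + 1)

/-- Vertices of `X_n`. -/
def XVert (f : ℕ → ℕ) (n : ℕ) : Type :=
  {p : ℕ × ℕ // p.1 < f n ∧ p.2 ≤ 2 ^ 2 ^ (2 * n) * f n}

/-- The graph `X_n`. -/
def Xgraph (f : ℕ → ℕ) (n : ℕ) : SimpleGraph (XVert f n) where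
  Adj u v := u ≠ v ∧ (colStep (2 ^ 2 ^ (2 * n)) u.val v.val ∨ colStep (2 ^ 2 ^ (2 * n)) v.val u.val)
  symm := ⟨fun u v h => ⟨h.1.symm, h.2.symm⟩⟩
  loopless := ⟨fun u h => h.1 rfl⟩

/-- Vertices of `Y_n`. -/
def YVert (f : ℕ → ℕ) (n : ℕ) : Type :=
  {p : ℕ × ℕ // p.1 < f n ∧ p.2 ≤ 2 ^ 2 ^ (2 * n + 1) * f n}

/-- The graph `Y_n`. -/
def Ygraph (f : ℕ → ℕ) (n : ℕ) : SimpleGraph (YVert f n) where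
  Adj u v := u ≠ v ∧
    (colStep (2 ^ 2 ^ (2 * n + 1)) u.val v.val ∨ colStep (2 ^ 2 ^ (2 * n + 1)) v.val u.val)
  symm := ⟨fun u v h => ⟨h.1.symm, h.2.symm⟩⟩
  loopless := ⟨fun u h => h.1 rfl⟩

/-- Vertices of `X = ⨆ (n ≥ 1) X_n`: triples `(n, i, j)` with `(i,j)` a vertex of `X_n`. -/
def XTVert (f : ℕ → ℕ) : Type :=
  {p : ℕ × ℕ × ℕ // 1 ≤ p.1 ∧ p.2.1 < f p.1 ∧ p.2.2 ≤ 2 ^ 2 ^ (2 * p.1) * f p.1}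

/-- The graph `X`, the disjoint union of the `X_n` for `n ≥ 1`. -/
def Xtotal (f : ℕ → ℕ) : SimpleGraph (XTVert f) where
  Adj u v := u ≠ v ∧ u.val.1 = v.val.1 ∧
    (colStep (2 ^ 2 ^ (2 * u.val.1)) u.val.2 v.val.2 ∨
     colStep (2 ^ 2 ^ (2 * u.val.1)) v.val.2 u.val.2)
  symm := ⟨fun u v h => ⟨h.1.symm, h.2.1.symm, by rw [← h.2.1]; exact h.2.2.symm⟩⟩
  loopless := ⟨fun u h => h.1 rfl⟩

/-- Vertices of `Y = ⨆ (n ≥ 1) Y_n`. -/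
def YTVert (f : ℕ → ℕ) : Type :=
  {p : ℕ × ℕ × ℕ // 1 ≤ p.1 ∧ p.2.1 < f p.1 ∧ p.2.2 ≤ 2 ^ 2 ^ (2 * p.1 + 1) * f p.1}

/-- The graph `Y`, the disjoint union of the `Y_n` for `n ≥ 1`. -/
def Ytotal (f : ℕ → ℕ) : SimpleGraph (YTVert f) where
  Adj u v := u ≠ v ∧ u.val.1 = v.val.1 ∧
    (colStep (2 ^ 2 ^ (2 * u.val.1 + 1)) u.val.2 v.val.2 ∨
     colStep (2 ^ 2 ^ (2 * u.val.1 + 1)) v.val.2 u.val.2)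
  symm := ⟨fun u v h => ⟨h.1.symm, h.2.1.symm, by rw [← h.2.1]; exact h.2.2.symm⟩⟩
  loopless := ⟨fun u h => h.1 rfl⟩

/-
The projection `(i, j) ↦ (0, j)` sends adjacent vertices to equal or adjacent ones, so it is
a wiring whose walks have length at most one; its image is the column `{0} × [0, M]` with
`M = 2^(2^(2n)) · f n`. A vertex of `X_n` is determined by its column and its image, and an edge
of `X_n` that is not collapsed is vertical, so it stays in one column. Hence at most `f n`
vertices lie over a point, and the ordered pairs whose walk uses a given edge `s(a, b)` are
determined by their column and by which of `a`, `b` the first vertex lies over.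
-/

lemma ncard_fiber_le {V W : Type*} {k : ℕ} (κ : V → Fin k) (φ : V → W)
    (hκφ : ∀ u v, κ u = κ v → φ u = φ v → u = v) (w : W) :
    {v | φ v = w}.ncard ≤ k := by
  calc {v | φ v = w}.ncard ≤ (Set.univ : Set (Fin k)).ncard :=
        Set.ncard_le_ncard_of_injOn κ (fun _ _ => Set.mem_univ _)
          (fun u hu v hv huv => hκφ u v huv (hu.trans hv.symm))
    _ = k := by rw [Set.ncard_univ, Nat.card_eq_fintype_card, Fintype.card_fin]

namespace Wiring

variable {V W : Type*} {G : SimpleGraph V} {H : SimpleGraph W}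

open Classical in
noncomputable def ofMap (φ : V → W)
    (hφ : ∀ ⦃u v⦄, G.Adj u v → φ u = φ v ∨ H.Adj (φ u) (φ v)) : Wiring G H where
  toFun := φ
  walk u v h :=
    if he : φ u = φ v then Walk.nil.copy rfl he else ((hφ h).resolve_left he).toWalk
  walk_symm u v h := by
    by_cases he : φ u = φ v
    · have nil_copy : ∀ {a b : W} (e : a = b),
          (Walk.nil.copy rfl e.symm : H.Walk b a) = (Walk.nil.copy rfl e).reverse := by
        rintro a _ rfl
        rfl
      rw [dif_pos he, dif_pos he.symm, nil_copy]
    · rw [dif_neg he, dif_neg (Ne.symm he)]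
      rfl

variable (φ : V → W) (hφ : ∀ ⦃u v⦄, G.Adj u v → φ u = φ v ∨ H.Adj (φ u) (φ v))

lemma edges_ofMap_walk_of_eq {u v : V} (h : G.Adj u v) (he : φ u = φ v) :
    ((ofMap φ hφ).walk u v h).edges = [] := by
  simp only [ofMap, dif_pos he, Walk.edges_copy, Walk.edges_nil]

lemma edges_ofMap_walk_of_ne {u v : V} (h : G.Adj u v) (he : φ u ≠ φ v) :
    ((ofMap φ hφ).walk u v h).edges = [s(φ u, φ v)] := by
  simp only [ofMap, dif_neg he]
  rfl

lemma mem_edges_ofMap_walk {u v : V} (h : G.Adj u v) {e : Sym2 W} :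
    e ∈ ((ofMap φ hφ).walk u v h).edges ↔ φ u ≠ φ v ∧ e = s(φ u, φ v) := by
  by_cases he : φ u = φ v
  · rw [edges_ofMap_walk_of_eq φ hφ h he]
    simp [he]
  · rw [edges_ofMap_walk_of_ne φ hφ h he, List.mem_singleton]
    exact (and_iff_right he).symm

lemma support_ofMap_walk_subset {u v : V} (h : G.Adj u v) :
    ∀ w ∈ ((ofMap φ hφ).walk u v h).support, w = φ u ∨ w = φ v := by
  intro w hw
  by_cases he : φ u = φ v
  · simp only [ofMap, dif_pos he, Walk.support_copy, Walk.support_nil,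
      List.mem_singleton] at hw
    exact Or.inl hw
  · simpa [ofMap, dif_neg he] using hw

lemma imageVerts_ofMap : (ofMap φ hφ).imageVerts = Set.range φ := by
  refine Set.union_eq_left.mpr ?_
  rintro w ⟨u, v, h, hw⟩
  rcases support_ofMap_walk_subset φ hφ h w hw with rfl | rfl
  exacts [⟨u, rfl⟩, ⟨v, rfl⟩]

lemma volume_ofMap : (ofMap φ hφ).volume = (Set.range φ).ncard :=
  congrArg Set.ncard (imageVerts_ofMap φ hφ)

variable {k : ℕ} (κ : V → Fin k)

lemma ncard_pairs_through_le (hκφ : ∀ u v, κ u = κ v → φ u = φ v → u = v)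
    (hκ : ∀ ⦃u v⦄, G.Adj u v → φ u ≠ φ v → κ u = κ v) (e : Sym2 W) :
    {p : V × V | ∃ h : G.Adj p.1 p.2, e ∈ ((ofMap φ hφ).walk p.1 p.2 h).edges}.ncard
      ≤ 2 * k := by
  obtain ⟨a, b⟩ := e
  set S := {p : V × V | ∃ h : G.Adj p.1 p.2, s(a, b) ∈ ((ofMap φ hφ).walk p.1 p.2 h).edges}
  have hS : ∀ p ∈ S, κ p.1 = κ p.2 ∧ s(a, b) = s(φ p.1, φ p.2) := by
    rintro p ⟨h, hp⟩
    rw [mem_edges_ofMap_walk] at hp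
    exact ⟨hκ h hp.1, hp.2⟩
  calc S.ncard ≤ ((Set.univ : Set (Fin k)) ×ˢ ({a, b} : Set W)).ncard := by
        refine Set.ncard_le_ncard_of_injOn (fun p => (κ p.1, φ p.1)) ?_ ?_
          (Set.finite_univ.prod (Set.toFinite _))
        · intro p hp
          have hmem : φ p.1 ∈ s(a, b) := (hS p hp).2 ▸ Sym2.mem_mk_left _ _
          simpa [Sym2.mem_iff] using hmem
        · intro p hp q hq hpq
          obtain ⟨hκp, hep⟩ := hS p hp
          obtain ⟨hκq, heq⟩ := hS q hq
          simp only [Prod.mk.injEq] at hpq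
          have hfst : p.1 = q.1 := hκφ _ _ hpq.1 hpq.2
          have hsnd : φ p.2 = φ q.2 := Sym2.congr_right.mp (by rw [← hep, heq, hpq.2])
          exact Prod.ext hfst (hκφ _ _ (by rw [← hκp, ← hκq, hpq.1]) hsnd)
    _ ≤ k * 2 := by
        rw [Set.ncard_prod, Set.ncard_univ, Nat.card_eq_fintype_card, Fintype.card_fin]
        exact Nat.mul_le_mul_left k
          ((Set.ncard_insert_le a {b}).trans (by rw [Set.ncard_singleton]))
    _ = 2 * k := Nat.mul_comm k 2

theorem isCoarse_ofMap (hκφ : ∀ u v, κ u = κ v → φ u = φ v → u = v)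
    (hκ : ∀ ⦃u v⦄, G.Adj u v → φ u ≠ φ v → κ u = κ v) :
    (ofMap φ hφ).IsCoarse k :=
  ⟨ncard_fiber_le κ φ hκφ, fun e _ => ncard_pairs_through_le φ hφ κ hκφ hκ e⟩

end Wiring

lemma colStep.eq_of_snd_ne {t : ℕ} {p q : ℕ × ℕ} (h : colStep t p q) (hpq : p.2 ≠ q.2) :
    p.1 = q.1 ∧ q.2 = p.2 + 1 := by
  rcases h with h | h
  exacts [h, absurd h.1 hpq]

lemma colStep_of_snd_eq_succ (t i : ℕ) {j j' : ℕ} (h : j' = j + 1) : colStep t (i, j) (i, j') :=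
  Or.inl ⟨rfl, h⟩

section Projection

variable {f : ℕ → ℕ} {n : ℕ}

lemma Xgraph_adj_of_height_ne {u v : XVert f n} (h : (Xgraph f n).Adj u v)
    (huv : u.val.2 ≠ v.val.2) :
    u.val.1 = v.val.1 ∧ (v.val.2 = u.val.2 + 1 ∨ u.val.2 = v.val.2 + 1) := by
  rcases h.2 with h | h
  · obtain ⟨hcol, hstep⟩ := h.eq_of_snd_ne huv
    exact ⟨hcol, Or.inl hstep⟩
  · obtain ⟨hcol, hstep⟩ := h.eq_of_snd_ne (Ne.symm huv)
    exact ⟨hcol.symm, Or.inr hstep⟩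

lemma XVert.height_le_Y_bound (v : XVert f n) : v.val.2 ≤ 2 ^ 2 ^ (2 * n + 1) * f n :=
  v.prop.2.trans <| Nat.mul_le_mul_right _ <|
    Nat.pow_le_pow_right two_pos (Nat.pow_le_pow_right two_pos (Nat.le_succ _))

def XVert.column (v : XVert f n) : Fin (f n) := ⟨v.val.1, v.prop.1⟩

variable (hpos : 0 < f n)

def verticalProj (v : XVert f n) : YVert f n := ⟨(0, v.val.2), hpos, v.height_le_Y_bound⟩

lemma verticalProj_eq_iff {u v : XVert f n} :
    verticalProj hpos u = verticalProj hpos v ↔ u.val.2 = v.val.2 :=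
  ⟨congrArg fun w : YVert f n => w.val.2, fun h => Subtype.ext (congrArg (Prod.mk 0) h)⟩

lemma verticalProj_adj ⦃u v : XVert f n⦄ (h : (Xgraph f n).Adj u v) :
    verticalProj hpos u = verticalProj hpos v ∨
      (Ygraph f n).Adj (verticalProj hpos u) (verticalProj hpos v) := by
  by_cases huv : u.val.2 = v.val.2
  · exact Or.inl ((verticalProj_eq_iff hpos).2 huv)
  refine Or.inr ⟨mt (verticalProj_eq_iff hpos).1 huv, ?_⟩
  rcases (Xgraph_adj_of_height_ne h huv).2 with h' | h'
  · exact Or.inl (colStep_of_snd_eq_succ _ 0 h')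
  · exact Or.inr (colStep_of_snd_eq_succ _ 0 h')

lemma eq_of_column_eq_of_verticalProj_eq (u v : XVert f n) (hc : u.column = v.column)
    (hp : verticalProj hpos u = verticalProj hpos v) : u = v :=
  Subtype.ext (Prod.ext (Fin.val_eq_of_eq hc) ((verticalProj_eq_iff hpos).1 hp))

lemma column_eq_of_verticalProj_ne ⦃u v : XVert f n⦄ (h : (Xgraph f n).Adj u v)
    (hp : verticalProj hpos u ≠ verticalProj hpos v) : u.column = v.column :=
  Fin.ext (Xgraph_adj_of_height_ne h (mt (verticalProj_eq_iff hpos).2 hp)).1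

lemma ncard_range_verticalProj :
    (Set.range (verticalProj hpos)).ncard = 2 ^ 2 ^ (2 * n) * f n + 1 := by
  have hinj : Set.InjOn (fun w : YVert f n => w.val.2) (Set.range (verticalProj hpos)) := by
    rintro _ ⟨u, rfl⟩ _ ⟨v, rfl⟩ huv
    exact (verticalProj_eq_iff hpos).2 huv
  have himage : (fun w : YVert f n => w.val.2) '' Set.range (verticalProj hpos) =
      Set.Iic (2 ^ 2 ^ (2 * n) * f n) := by
    ext j
    constructor
    · rintro ⟨_, ⟨v, rfl⟩, rfl⟩
      exact v.prop.2
    · intro hj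
      exact ⟨_, ⟨⟨(0, j), hpos, hj⟩, rfl⟩, rfl⟩
  rw [← hinj.ncard_image, himage, ← Finset.coe_Iic, Set.ncard_coe_finset, Nat.card_Iic]

end Projection

theorem statement11_general
    (f : ℕ → ℕ)
    (hf1 : f 1 = 1)
    (hf : ∀ n, 2 ≤ n → 2 ≤ f n ∧ f n ≤ n)
    (n : ℕ) (hn : 1 ≤ n) :
    ∃ Wr : Wiring (Xgraph f n) (Ygraph f n),
      (∀ v : XVert f n, (Wr.toFun v).val = (0, v.val.2)) ∧
      (∀ (u v : XVert f n) (h : (Xgraph f n).Adj u v),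
        (u.val.2 = v.val.2 → (Wr.walk u v h).edges = []) ∧
        (u.val.2 ≠ v.val.2 → (Wr.walk u v h).edges = [s(Wr.toFun u, Wr.toFun v)])) ∧
      Wr.IsCoarse (f n) ∧
      Wr.volume = 2 ^ 2 ^ (2 * n) * f n + 1 := by
  have hpos : 0 < f n := by
    rcases hn.eq_or_lt with rfl | hn
    · rw [hf1]; exact one_pos
    · exact two_pos.trans_le (hf n hn).1
  refine ⟨Wiring.ofMap (verticalProj hpos) (verticalProj_adj hpos), fun _ => rfl,
    fun u v h => ⟨fun huv => ?_, fun huv => ?_⟩, ?_, ?_⟩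
  · exact Wiring.edges_ofMap_walk_of_eq _ _ h ((verticalProj_eq_iff hpos).2 huv)
  · exact Wiring.edges_ofMap_walk_of_ne _ _ h (mt (verticalProj_eq_iff hpos).1 huv)
  · exact Wiring.isCoarse_ofMap _ _ XVert.column (eq_of_column_eq_of_verticalProj_eq hpos)
      (column_eq_of_verticalProj_ne hpos)
  · rw [Wiring.volume_ofMap, ncard_range_verticalProj]

/-- For `n ≥ 1`, the vertical projection `(i, j) ↦ (0, j)` — sending
each vertical edge `(i,j)-(i,j+1)` of `X_n` to the edge `(0,j)-(0,j+1)` of `Y_n` and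
collapsing each horizontal edge to a vertex — is a coarse `f n`-wiring of `X_n` into
`Y_n` of volume exactly `2^(2^(2n)) · f n + 1`. -/
theorem statement11
    (f : ℕ → ℕ)
    (hsurj : ∀ k, 1 ≤ k → ∃ n, 1 ≤ n ∧ f n = k)
    (hf1 : f 1 = 1)
    (hf : ∀ n, 2 ≤ n → 2 ≤ f n ∧ f n ≤ n)
    (hinf : ∀ k, 2 ≤ k → {n | f n = k}.Infinite)
    (n : ℕ) (hn : 1 ≤ n) :
    ∃ Wr : Wiring (Xgraph f n) (Ygraph f n),
      (∀ v : XVert f n, (Wr.toFun v).val = (0, v.val.2)) ∧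
      (∀ (u v : XVert f n) (h : (Xgraph f n).Adj u v),
        (u.val.2 = v.val.2 → (Wr.walk u v h).edges = []) ∧
        (u.val.2 ≠ v.val.2 → (Wr.walk u v h).edges = [s(Wr.toFun u, Wr.toFun v)])) ∧
      Wr.IsCoarse (f n) ∧
      Wr.volume = 2 ^ 2 ^ (2 * n) * f n + 1 :=
  statement11_general f hf1 hf n hn
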